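/- Under the PIGD setup, assume additionally that F is coercive, argmin F is nonempty, 0 < inf_k β_k ≤ β_k ≤ β_0 < 1 for all k, and F satisfies the optimal strong convexity condition with constant ν > 0. Then F(x^k) − min F converges linearly: there exist ω ∈ (0,1) and C > 0 such that F(x^k) − min F ≤ C ω^k for all k. -/

import Mathlib

/-!
The Lyapunov function `H k = F xᵏ - min F + δₖ ‖xᵏ - xᵏ⁻¹‖²` with `δₖ = βₖ L / (4 (1 - βₖ) c)`
drops by at least `θ ‖xᵏ⁺¹ - xᵏ‖²`, `θ = L (1 - c) / (2 c)`, at every step: add the descent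
lemma and the gradient inequality for `f` to the three-point inequality of the proximal step,
and absorb the inertial cross term by Young's inequality. Testing the same step inequality
against the projection of `xᵏ⁺¹` onto `argmin F` and using optimal strong convexity bounds
`H (k + 1)` by a multiple of `‖xᵏ⁺¹ - xᵏ‖² + ‖xᵏ - xᵏ⁻¹‖²`, hence by a multiple of
`H (k - 1) - H (k + 1)`. So `H` contracts by a fixed factor every two steps.
-/

open Set Filter Topology AffineMap
open scoped RealInnerProductSpace

lemma exists_nearest_minimizer {X : Type*} [NormedAddCommGroup X] [ProperSpace X] {Φ : X → ℝ}
    (hΦ : LowerSemicontinuous Φ) {xstar : X} (hxstar : ∀ y, Φ xstar ≤ Φ y) (z : X) :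
    ∃ zbar, (∀ y, Φ zbar ≤ Φ y) ∧ ∀ y, (∀ w, Φ y ≤ Φ w) → ‖z - zbar‖ ≤ ‖z - y‖ := by
  have hclosed : IsClosed {w | ∀ v, Φ w ≤ Φ v} := by
    convert hΦ.isClosed_preimage (Φ xstar) using 1
    ext w
    exact ⟨fun h => h xstar, fun h v => h.trans (hxstar v)⟩
  obtain ⟨zbar, hzbar, hdist⟩ := hclosed.exists_infDist_eq_dist ⟨xstar, hxstar⟩ z
  refine ⟨zbar, hzbar, fun y hy => ?_⟩
  rw [← dist_eq_norm, ← dist_eq_norm, ← hdist]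
  exact Metric.infDist_le_dist_of_mem hy

lemma exists_geometric_bound_of_two_step {H : ℕ → ℝ} {τ : ℝ} (hτ0 : 0 < τ) (hτ1 : τ < 1)
    (hH0 : 0 ≤ H 0) (hH1 : H 1 ≤ H 0) (hstep : ∀ k, H (k + 2) ≤ τ * H k) :
    ∃ ω : ℝ, 0 < ω ∧ ω < 1 ∧ ∃ C : ℝ, 0 < C ∧ ∀ k, H k ≤ C * ω ^ k := by
  set ω := √τ
  have hω0 : 0 < ω := Real.sqrt_pos.2 hτ0
  have hω1 : ω < 1 := (Real.sqrt_lt' one_pos).2 (by simpa using hτ1)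
  refine ⟨ω, hω0, hω1, (H 0 + 1) / ω, by positivity, Nat.twoStepInduction ?_ ?_ ?_⟩
  · rw [pow_zero, mul_one, le_div_iff₀ hω0]
    nlinarith
  · rw [pow_one, div_mul_cancel₀ _ hω0.ne']
    linarith
  · intro k ih _
    calc H (k + 2) ≤ τ * H k := hstep k
      _ ≤ τ * ((H 0 + 1) / ω * ω ^ k) := by gcongr
      _ = (H 0 + 1) / ω * ω ^ (k + 2) := by rw [← Real.sq_sqrt hτ0.le]; ring

lemma exists_geometric_bound_of_lyapunov {H e : ℕ → ℝ} {θ M : ℝ} (hθ : 0 < θ) (hM : 0 < M)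
    (hH0 : 0 ≤ H 0) (he : ∀ k, 0 ≤ e k) (hdec : ∀ k, H (k + 1) + θ * e (k + 1) ≤ H k)
    (hbound : ∀ k, H (k + 1) ≤ M * (e (k + 1) + e k)) :
    ∃ ω : ℝ, 0 < ω ∧ ω < 1 ∧ ∃ C : ℝ, 0 < C ∧ ∀ k, H k ≤ C * ω ^ k := by
  refine exists_geometric_bound_of_two_step (τ := M / (M + θ)) (by positivity)
    ((div_lt_one (by positivity)).2 (by linarith)) hH0
    (by linarith [hdec 0, mul_nonneg hθ.le (he 1)]) fun k => ?_
  have hk := hbound (k + 1)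
  have h1 := hdec (k + 1)
  have h2 := hdec k
  rw [div_mul_eq_mul_div, le_div_iff₀ (by positivity)]
  nlinarith

lemma exists_geometric_bound_of_inertial_descent {Φ D w : ℕ → ℝ} {θ K : ℝ} (hθ : 0 < θ)
    (hK : 0 < K) (hΦ0 : 0 ≤ Φ 0) (hD : ∀ k, 0 ≤ D k) (hw : Antitone w) (hw0 : ∀ k, 0 ≤ w k)
    (hdec : ∀ k, Φ (k + 1) + (w k + θ) * D (k + 1) ≤ Φ k + w k * D k)
    (hbound : ∀ k, Φ (k + 1) ≤ K * (D (k + 1) + D k)) :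
    ∃ ω : ℝ, 0 < ω ∧ ω < 1 ∧ ∃ C : ℝ, 0 < C ∧ ∀ k, Φ k ≤ C * ω ^ k := by
  have hwD k : 0 ≤ w k * D k := mul_nonneg (hw0 k) (hD k)
  obtain ⟨ω, hω0, hω1, C, hC, hHC⟩ := exists_geometric_bound_of_lyapunov
    (H := fun k => Φ k + w k * D k) (e := D) (M := K + w 0) hθ (by linarith [hw0 0])
    (by linarith [hwD 0]) hD
    (fun k => by nlinarith [hdec k, hw k.le_succ, hD (k + 1)])
    (fun k => by nlinarith [hbound k, hw (Nat.zero_le (k + 1)), hw0 0, hD k, hD (k + 1)])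
  exact ⟨ω, hω0, hω1, C, hC, fun k => by linarith [hHC k, hwD k]⟩

variable {E : Type*} [NormedAddCommGroup E] [InnerProductSpace ℝ E]

lemma norm_smul_add_smul_sq {a b : ℝ} (hab : a + b = 1) (u v : E) :
    ‖a • u + b • v‖ ^ 2 = a * ‖u‖ ^ 2 + b * ‖v‖ ^ 2 - a * b * ‖u - v‖ ^ 2 := by
  rw [norm_add_sq_real, norm_sub_sq_real, norm_smul, norm_smul, real_inner_smul_left,
    real_inner_smul_right, Real.norm_eq_abs, Real.norm_eq_abs, mul_pow, mul_pow, sq_abs, sq_abs]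
  obtain rfl := eq_sub_of_add_eq hab
  ring

lemma strongConvexOn_norm_sub_sq_div (γ : ℝ) (y : E) :
    StrongConvexOn univ γ⁻¹ fun z => ‖z - y‖ ^ 2 / (2 * γ) := by
  refine ⟨convex_univ, fun z _ w _ a b _ _ hab => le_of_eq ?_⟩
  have hsplit : a • z + b • w - y = a • (z - y) + b • (w - y) := by
    obtain rfl := eq_sub_of_add_eq hab
    module
  simp only [smul_eq_mul]
  rw [hsplit, norm_smul_add_smul_sq hab, sub_sub_sub_cancel_right]
  ring

lemma StrongConvexOn.add_sq_le_of_isMinOn {s : Set E} {m : ℝ} {f : E → ℝ} {p z : E}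
    (hf : StrongConvexOn s m f) (hp : IsMinOn f s p) (hps : p ∈ s) (hzs : z ∈ s) :
    f p + m / 2 * ‖z - p‖ ^ 2 ≤ f z := by
  have hle : ∀ t ∈ Ioo (0:ℝ) 1, f p + (1 - t) * (m / 2 * ‖z - p‖ ^ 2) ≤ f z := by
    rintro t ⟨ht0, ht1⟩
    have hconv := hf.2 hps hzs (sub_nonneg.2 ht1.le) ht0.le (sub_add_cancel 1 t)
    have hmin := hp (hf.1 hps hzs (sub_nonneg.2 ht1.le) ht0.le (sub_add_cancel 1 t))
    rw [norm_sub_rev] at hconv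
    simp only [smul_eq_mul, mem_ofPred_eq] at hconv hmin
    nlinarith
  have hlim : Tendsto (fun t : ℝ => f p + (1 - t) * (m / 2 * ‖z - p‖ ^ 2)) (𝓝[>] 0)
      (𝓝 (f p + m / 2 * ‖z - p‖ ^ 2)) := by
    refine tendsto_nhdsWithin_of_tendsto_nhds ?_
    have hcont : Continuous fun t : ℝ => f p + (1 - t) * (m / 2 * ‖z - p‖ ^ 2) := by fun_prop
    simpa using hcont.tendsto 0
  exact le_of_tendsto hlim (eventually_of_mem (Ioo_mem_nhdsGT zero_lt_one) hle)

lemma ConvexOn.prox_three_point {g : E → ℝ} (hg : ConvexOn ℝ univ g) {γ : ℝ} {y p : E}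
    (hp : IsMinOn (fun z => ‖z - y‖ ^ 2 / (2 * γ) + g z) univ p) (z : E) :
    ‖p - y‖ ^ 2 / (2 * γ) + g p + ‖z - p‖ ^ 2 / (2 * γ) ≤ ‖z - y‖ ^ 2 / (2 * γ) + g z := by
  have hstrong : StrongConvexOn univ γ⁻¹ fun z => ‖z - y‖ ^ 2 / (2 * γ) + g z := by
    have h := (strongConvexOn_norm_sub_sq_div γ y).add (uniformConvexOn_zero.2 hg)
    rw [add_zero] at h
    exact h
  calc _ = ‖p - y‖ ^ 2 / (2 * γ) + g p + γ⁻¹ / 2 * ‖z - p‖ ^ 2 := by ring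
    _ ≤ _ := hstrong.add_sq_le_of_isMinOn hp (mem_univ p) (mem_univ z)

section Smooth

variable [CompleteSpace E]

lemma HasGradientAt.hasDerivAt_comp_lineMap {f : E → ℝ} {v x y : E} {t : ℝ}
    (h : HasGradientAt f v (lineMap x y t)) :
    HasDerivAt (fun s => f (lineMap x y s)) ⟪v, y - x⟫ t := by
  simpa [Function.comp_def] using h.hasFDerivAt.comp_hasDerivAt t hasDerivAt_lineMap

lemma ConvexOn.add_inner_le_of_hasGradientAt {f : E → ℝ} (hf : ConvexOn ℝ univ f) {v x : E}
    (hx : HasGradientAt f v x) (z : E) : f x + ⟪v, z - x⟫ ≤ f z := by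
  have hline := (hf.comp_affineMap (lineMap x z)).le_slope_of_hasDerivAt (mem_univ 0)
    (mem_univ 1) zero_lt_one (HasGradientAt.hasDerivAt_comp_lineMap (t := 0) (by simpa using hx))
  simp only [slope_def_field, Function.comp_apply, lineMap_apply_one, lineMap_apply_zero, sub_zero,
    div_one] at hline
  linarith

lemma le_add_inner_add_sq_of_lipschitz_gradient {f : E → ℝ} {f' : E → E} {L : ℝ}
    (hf' : ∀ x, HasGradientAt f (f' x) x) (hlip : ∀ x y, ‖f' x - f' y‖ ≤ L * ‖x - y‖) (x y : E) :
    f y ≤ f x + ⟪f' x, y - x⟫ + L / 2 * ‖y - x‖ ^ 2 := by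
  set ψ : ℝ → ℝ := fun t => f (lineMap x y t) - t * ⟪f' x, y - x⟫ - L / 2 * t ^ 2 * ‖y - x‖ ^ 2
  have hψ : ∀ t, HasDerivAt ψ (⟪f' (lineMap x y t), y - x⟫ - ⟪f' x, y - x⟫
      - L * t * ‖y - x‖ ^ 2) t := by
    intro t
    have hderiv := (((hf' (lineMap x y t)).hasDerivAt_comp_lineMap).sub ((hasDerivAt_id t).mul_const
      ⟪f' x, y - x⟫)).sub (((hasDerivAt_pow 2 t).const_mul (L / 2)).mul_const (‖y - x‖ ^ 2))
    refine hderiv.congr_deriv ?_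
    simp only [one_mul, Nat.cast_ofNat, Nat.add_one_sub_one, pow_one]
    ring
  have hanti : AntitoneOn ψ (Ici 0) := by
    refine antitoneOn_of_hasDerivWithinAt_nonpos (convex_Ici 0)
      (fun t _ => (hψ t).continuousAt.continuousWithinAt) (fun t _ => (hψ t).hasDerivWithinAt) ?_
    intro t ht
    rw [interior_Ici] at ht
    have hdist : ‖lineMap x y t - x‖ = t * ‖y - x‖ := by
      rw [← vsub_eq_sub, lineMap_vsub_left, norm_smul, Real.norm_of_nonneg (le_of_lt ht),
        vsub_eq_sub]
    calc ⟪f' (lineMap x y t), y - x⟫ - ⟪f' x, y - x⟫ - L * t * ‖y - x‖ ^ 2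
        = ⟪f' (lineMap x y t) - f' x, y - x⟫ - L * t * ‖y - x‖ ^ 2 := by rw [inner_sub_left]
      _ ≤ ‖f' (lineMap x y t) - f' x‖ * ‖y - x‖ - L * t * ‖y - x‖ ^ 2 := by
        gcongr; exact real_inner_le_norm _ _
      _ ≤ L * ‖lineMap x y t - x‖ * ‖y - x‖ - L * t * ‖y - x‖ ^ 2 := by
        gcongr; exact hlip _ _
      _ = 0 := by rw [hdist]; ring
  have := hanti self_mem_Ici (show (0:ℝ) ≤ 1 from zero_le_one) zero_le_one
  simp [ψ] at this
  linarith

variable {f g : E → ℝ} {f' : E → E} {L γ β : ℝ} {x x' p : E}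

lemma pigd_step_le (hfconv : ConvexOn ℝ univ f) (hgconv : ConvexOn ℝ univ g)
    (hf' : ∀ x, HasGradientAt f (f' x) x) (hlip : ∀ x y, ‖f' x - f' y‖ ≤ L * ‖x - y‖)
    (hγ : γ ≠ 0)
    (hp : IsMinOn (fun z => ‖z - (x - γ • f' x + β • (x - x'))‖ ^ 2 / (2 * γ) + g z) univ p)
    (z : E) :
    f p + g p ≤ f z + g z + L / 2 * ‖p - x‖ ^ 2 + ⟪z - p, p - x - β • (x - x')⟫ / γ := by
  set y := x - γ • f' x + β • (x - x')
  set I := ⟪z - p, p - x - β • (x - x')⟫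
  have hdesc := le_add_inner_add_sq_of_lipschitz_gradient hf' hlip x p
  have hconv := hfconv.add_inner_le_of_hasGradientAt (hf' x) z
  have hprox := hgconv.prox_three_point hp z
  have hinner : ⟪z - p, p - y⟫ = I + γ * ⟪f' x, z - p⟫ := by
    rw [show p - y = (p - x - β • (x - x')) + γ • f' x by simp only [y]; abel,
      inner_add_right, real_inner_smul_right, real_inner_comm (f' x) (z - p)]
  have hzy : ‖z - y‖ ^ 2 / (2 * γ)
      = ‖z - p‖ ^ 2 / (2 * γ) + (I / γ + ⟪f' x, z - p⟫) + ‖p - y‖ ^ 2 / (2 * γ) := by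
    rw [← sub_add_sub_cancel z p y, norm_add_sq_real, add_div, add_div, hinner]
    field_simp
  have hzx : ⟪f' x, z - x⟫ = ⟪f' x, z - p⟫ + ⟪f' x, p - x⟫ := by
    rw [← inner_add_right, sub_add_sub_cancel]
  linarith

lemma pigd_sufficient_decrease (hfconv : ConvexOn ℝ univ f) (hgconv : ConvexOn ℝ univ g)
    (hf' : ∀ x, HasGradientAt f (f' x) x) (hlip : ∀ x y, ‖f' x - f' y‖ ≤ L * ‖x - y‖)
    {c : ℝ} (hL : 0 < L) (hc : 0 < c) (hβ0 : 0 ≤ β) (hβ1 : β < 1)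
    (hγ : γ = 2 * (1 - β) * c / L)
    (hp : IsMinOn (fun z => ‖z - (x - γ • f' x + β • (x - x'))‖ ^ 2 / (2 * γ) + g z) univ p) :
    f p + g p + (β * L / (4 * (1 - β) * c) + L * (1 - c) / (2 * c)) * ‖p - x‖ ^ 2
      ≤ f x + g x + β * L / (4 * (1 - β) * c) * ‖x - x'‖ ^ 2 := by
  have h1β : 0 < 1 - β := sub_pos.2 hβ1
  have hγpos : 0 < γ := by rw [hγ]; positivity
  have hstep := pigd_step_le hfconv hgconv hf' hlip hγpos.ne' hp x
  have hinner : ⟪x - p, p - x - β • (x - x')⟫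
      ≤ -‖p - x‖ ^ 2 + β * ((‖p - x‖ ^ 2 + ‖x - x'‖ ^ 2) / 2) := by
    have hyoung : ⟪p - x, x - x'⟫ ≤ (‖p - x‖ ^ 2 + ‖x - x'‖ ^ 2) / 2 := by
      linarith [norm_sub_sq_real (p - x) (x - x'), sq_nonneg ‖p - x - (x - x')‖]
    rw [inner_sub_right, real_inner_smul_right, ← neg_sub p x, inner_neg_left, inner_neg_left,
      real_inner_self_eq_norm_sq]
    nlinarith
  have hrate : (-‖p - x‖ ^ 2 + β * ((‖p - x‖ ^ 2 + ‖x - x'‖ ^ 2) / 2)) / γ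
      = -(L / 2) * ‖p - x‖ ^ 2 - (β * L / (4 * (1 - β) * c) + L * (1 - c) / (2 * c)) * ‖p - x‖ ^ 2
        + β * L / (4 * (1 - β) * c) * ‖x - x'‖ ^ 2 := by
    rw [hγ]
    field_simp
    ring
  linarith [div_le_div_of_nonneg_right hinner hγpos.le]

lemma pigd_error_bound (hfconv : ConvexOn ℝ univ f) (hgconv : ConvexOn ℝ univ g)
    (hf' : ∀ x, HasGradientAt f (f' x) x) (hlip : ∀ x y, ‖f' x - f' y‖ ≤ L * ‖x - y‖)
    {γ₀ ν : ℝ} {z : E} (hL : 0 ≤ L) (hβ0 : 0 ≤ β) (hβ1 : β ≤ 1) (hγ₀ : 0 < γ₀) (hγ₀γ : γ₀ ≤ γ)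
    (hν : 0 < ν)
    (hp : IsMinOn (fun z => ‖z - (x - γ • f' x + β • (x - x'))‖ ^ 2 / (2 * γ) + g z) univ p)
    (hz : ν * ‖p - z‖ ^ 2 ≤ f p + g p - (f z + g z)) :
    f p + g p - (f z + g z) ≤ (L + 2 / (ν * γ₀ ^ 2)) * (‖p - x‖ ^ 2 + ‖x - x'‖ ^ 2) := by
  have hγ : 0 < γ := hγ₀.trans_le hγ₀γ
  have hstep := pigd_step_le hfconv hgconv hf' hlip hγ.ne' hp z
  set s := f p + g p - (f z + g z)
  set r := ‖p - z‖
  set d := ‖p - x‖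
  set u := ‖x - x'‖
  have hinner : ⟪z - p, p - x - β • (x - x')⟫ ≤ r * (d + u) := by
    have hu : ‖β • (x - x')‖ ≤ u := by
      rw [norm_smul, Real.norm_of_nonneg hβ0]
      exact mul_le_of_le_one_left (norm_nonneg _) hβ1
    calc ⟪z - p, p - x - β • (x - x')⟫ ≤ ‖z - p‖ * ‖p - x - β • (x - x')‖ := real_inner_le_norm _ _
      _ ≤ r * (d + u) := by
        rw [norm_sub_rev]
        gcongr
        exact (norm_sub_le _ _).trans (by gcongr)
  have hs : s ≤ L / 2 * d ^ 2 + r * (d + u) / γ₀ := by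
    have : ⟪z - p, p - x - β • (x - x')⟫ / γ ≤ r * (d + u) / γ₀ :=
      (div_le_div_of_nonneg_right hinner hγ.le).trans
        (div_le_div_of_nonneg_left (by positivity) hγ₀ hγ₀γ)
    linarith
  have hyoung : r * (d + u) / γ₀ ≤ ν / 2 * r ^ 2 + (d ^ 2 + u ^ 2) / (ν * γ₀ ^ 2) := by
    have hden : 0 < 2 * ν * γ₀ ^ 2 := by positivity
    have hsq : ν / 2 * r ^ 2 + (d + u) ^ 2 / (2 * ν * γ₀ ^ 2) - r * (d + u) / γ₀
        = (ν * γ₀ * r - (d + u)) ^ 2 / (2 * ν * γ₀ ^ 2) := by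
      field_simp
      ring
    have hdu : (d + u) ^ 2 / (2 * ν * γ₀ ^ 2) ≤ (d ^ 2 + u ^ 2) / (ν * γ₀ ^ 2) := by
      rw [div_le_div_iff₀ hden (by positivity)]
      nlinarith [sq_nonneg (d - u), mul_pos hν (pow_pos hγ₀ 2)]
    linarith [div_nonneg (sq_nonneg (ν * γ₀ * r - (d + u))) hden.le]
  have hK : (L + 2 / (ν * γ₀ ^ 2)) * (d ^ 2 + u ^ 2)
      = L * d ^ 2 + L * u ^ 2 + 2 * ((d ^ 2 + u ^ 2) / (ν * γ₀ ^ 2)) := by ring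
  linarith [mul_nonneg hL (sq_nonneg u)]

end Smooth

theorem pigd_stmt6_general
    {n : ℕ} (f g F : EuclideanSpace ℝ (Fin n) → ℝ)
    (f' : EuclideanSpace ℝ (Fin n) → EuclideanSpace ℝ (Fin n))
    (L c : ℝ) (hL : 0 < L) (hc0 : 0 < c) (hc1 : c < 1)
    (hfconv : ConvexOn ℝ Set.univ f)
    (hgconv : ConvexOn ℝ Set.univ g)
    (hgcont : Continuous g)
    (hf' : ∀ x, HasGradientAt f (f' x) x)
    (hlip : ∀ x y, ‖f' x - f' y‖ ≤ L * ‖x - y‖)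
    (hF : ∀ x, F x = f x + g x)
    (β γ : ℕ → ℝ)
    (hβnonneg : ∀ k, 0 ≤ β k)
    (hβmono : ∀ k, β (k + 1) ≤ β k)
    (hγ : ∀ k, γ k = 2 * (1 - β k) * c / L)
    (prox : ℝ → EuclideanSpace ℝ (Fin n) → EuclideanSpace ℝ (Fin n))
    (hprox : ∀ (γ' : ℝ) (y : EuclideanSpace ℝ (Fin n)), 0 < γ' →
      IsMinOn (fun z => ‖z - y‖ ^ 2 / (2 * γ') + g z) Set.univ (prox γ' y))
    (x : ℤ → EuclideanSpace ℝ (Fin n))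
    (hiter : ∀ k : ℕ,
      x (k + 1) = prox (γ k) (x k - γ k • f' (x k) + β k • (x k - x ((k : ℤ) - 1))))
    -- `argmin F` is nonempty and `F xstar = min F`
    (xstar : EuclideanSpace ℝ (Fin n)) (hxstar : ∀ y, F xstar ≤ F y)
    (hβlt : ∀ k, β k < 1)
    -- optimal strong convexity condition with constant `ν > 0`
    (ν : ℝ) (hν : 0 < ν)
    (hosc : ∀ z zbar : EuclideanSpace ℝ (Fin n),
      (∀ y, F zbar ≤ F y) → (∀ y, (∀ w, F y ≤ F w) → ‖z - zbar‖ ≤ ‖z - y‖) →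
        ν * ‖z - zbar‖ ^ 2 ≤ F z - F xstar) :
    ∃ ω : ℝ, 0 < ω ∧ ω < 1 ∧ ∃ C : ℝ, 0 < C ∧ ∀ k : ℕ, F (x k) - F xstar ≤ C * ω ^ k := by
  obtain rfl : F = f + g := funext hF
  have hβanti : Antitone β := antitone_nat_of_succ_le hβmono
  have h1β k : 0 < 1 - β k := sub_pos.2 (hβlt k)
  have h1c : 0 < 1 - c := sub_pos.2 hc1
  have hγpos k : 0 < γ k := by rw [hγ k]; have := h1β k; positivity
  have hγ0 k : γ 0 ≤ γ k := by
    rw [hγ, hγ]; have := h1β 0; gcongr; exact hβanti (Nat.zero_le k)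
  have hmin (k : ℕ) := hiter k ▸ hprox _ _ (hγpos k)
  have hFcont : Continuous (f + g) :=
    (continuous_iff_continuousAt.2 fun x => (hf' x).hasFDerivAt.continuousAt).add hgcont
  refine exists_geometric_bound_of_inertial_descent (D := fun k : ℕ => ‖x k - x (k - 1)‖ ^ 2)
    (w := fun k => β k * L / (4 * (1 - β k) * c)) (θ := L * (1 - c) / (2 * c))
    (K := L + 2 / (ν * γ 0 ^ 2))
    (by positivity) (by positivity) (sub_nonneg.2 (hxstar _)) (fun k => sq_nonneg _)
    (fun i j hij => by
      have := h1β i; have := h1β j; have := hβnonneg i; have := hβanti hij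
      dsimp only; gcongr)
    (fun k => by have := h1β k; have := hβnonneg k; positivity) (fun k => ?_) (fun k => ?_)
  · have := pigd_sufficient_decrease hfconv hgconv hf' hlip hL hc0 (hβnonneg k) (hβlt k) (hγ k)
      (hmin k)
    push_cast [Pi.add_apply]
    rw [add_sub_cancel_right]
    linarith
  · obtain ⟨zbar, hzbar, hnear⟩ :=
      exists_nearest_minimizer hFcont.lowerSemicontinuous hxstar (x (k + 1))
    have hFzbar : (f + g) zbar = (f + g) xstar := le_antisymm (hzbar xstar) (hxstar zbar)
    have := pigd_error_bound hfconv hgconv hf' hlip hL.le (hβnonneg k) (hβlt k).le (hγpos 0)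
      (hγ0 k) hν (hmin k) (hFzbar ▸ hosc _ _ hzbar hnear)
    push_cast
    rw [add_sub_cancel_right, ← hFzbar]
    exact this

/-- Theorem 3, linear convergence of PIGD under optimal strong convexity.
Under the PIGD setup, if `F` is coercive, `argmin F` is nonempty,
`0 < inf_k β_k ≤ β_k ≤ β_0 < 1`, and `F` satisfies the optimal strong convexity condition
`F(x) − min F ≥ ν‖x − x̄‖²` (where `x̄` is the projection of `x` onto `argmin F`) with
`ν > 0`, then `F(xᵏ) − min F ≤ C ωᵏ` for some `ω ∈ (0,1)` and `C > 0`. -/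
theorem pigd_stmt6
    {n : ℕ} (f g F : EuclideanSpace ℝ (Fin n) → ℝ)
    (f' : EuclideanSpace ℝ (Fin n) → EuclideanSpace ℝ (Fin n))
    (L c : ℝ) (hL : 0 < L) (hc0 : 0 < c) (hc1 : c < 1)
    (hfconv : ConvexOn ℝ Set.univ f)
    (hgconv : ConvexOn ℝ Set.univ g)
    (hgcont : Continuous g)
    (hf' : ∀ x, HasGradientAt f (f' x) x)
    (hlip : ∀ x y, ‖f' x - f' y‖ ≤ L * ‖x - y‖)
    (hF : ∀ x, F x = f x + g x)
    (hFbdd : BddBelow (Set.range F))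
    (β γ : ℕ → ℝ)
    (hβnonneg : ∀ k, 0 ≤ β k)
    (hβmono : ∀ k, β (k + 1) ≤ β k)
    (hγ : ∀ k, γ k = 2 * (1 - β k) * c / L)
    (prox : ℝ → EuclideanSpace ℝ (Fin n) → EuclideanSpace ℝ (Fin n))
    (hprox : ∀ (γ' : ℝ) (y : EuclideanSpace ℝ (Fin n)), 0 < γ' →
      IsMinOn (fun z => ‖z - y‖ ^ 2 / (2 * γ') + g z) Set.univ (prox γ' y))
    (x : ℤ → EuclideanSpace ℝ (Fin n))
    (hiter : ∀ k : ℕ,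
      x (k + 1) = prox (γ k) (x k - γ k • f' (x k) + β k • (x k - x ((k : ℤ) - 1))))
    -- `argmin F` is nonempty and `F xstar = min F`
    (xstar : EuclideanSpace ℝ (Fin n)) (hxstar : ∀ y, F xstar ≤ F y)
    (hβlt : ∀ k, β k < 1)
    -- `0 < inf_k β_k` and `β_k ≤ β_0 < 1`
    (b : ℝ) (hb : 0 < b) (hβlb : ∀ k, b ≤ β k) (hβub : ∀ k, β k ≤ β 0) (hβ0 : β 0 < 1)
    -- `F` is coercive
    (hcoer : Filter.Tendsto F (Filter.comap norm Filter.atTop) Filter.atTop)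
    -- optimal strong convexity condition with constant `ν > 0`
    (ν : ℝ) (hν : 0 < ν)
    (hosc : ∀ z zbar : EuclideanSpace ℝ (Fin n),
      (∀ y, F zbar ≤ F y) → (∀ y, (∀ w, F y ≤ F w) → ‖z - zbar‖ ≤ ‖z - y‖) →
        ν * ‖z - zbar‖ ^ 2 ≤ F z - F xstar) :
    ∃ ω : ℝ, 0 < ω ∧ ω < 1 ∧ ∃ C : ℝ, 0 < C ∧ ∀ k : ℕ, F (x k) - F xstar ≤ C * ω ^ k :=
  pigd_stmt6_general f g F f' L c hL hc0 hc1 hfconv hgconv hgcont hf' hlip hF β γ hβnonneg hβmono hγ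
    prox hprox x hiter xstar hxstar hβlt ν hν hosc
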